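/- Suppose the sequence (x^k, λ^k) is generated by P-ALM, i.e., x^{k+1} ∈ X minimizes x ↦ θ(x) − ⟨λ^k, Ax − b⟩ + (r/2)‖A(x − x^k)‖² + (1/2)⟨x − x^k, Q(x − x^k)⟩ over X and λ^{k+1} = λ^k − r(A(2x^{k+1} − x^k) − b). Then for every w* = (x*, λ*) in the solution set M* and every k: ‖w* − w^{k+1}‖²_H ≤ ‖w* − w^k‖²_H − ‖w^k − w^{k+1}‖²_H, where w^k = (x^k, λ^k). -/

import Mathlib

open Matrix Finset

noncomputable section

/-- The bilinear form `(w₁, w₂) ↦ ⟨w₁, H w₂⟩` of the P-ALM matrix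
`H = [[rAᵀA + Q, Aᵀ], [A, (1/r)I]]` on `ℝⁿ × ℝᵐ`. -/
def Hbil {n m : ℕ} (A : Matrix (Fin m) (Fin n) ℝ) (Q : Matrix (Fin n) (Fin n) ℝ) (r : ℝ)
    (w₁ w₂ : (Fin n → ℝ) × (Fin m → ℝ)) : ℝ :=
  w₁.1 ⬝ᵥ ((r • (Aᵀ * A) + Q) *ᵥ w₂.1) + w₁.1 ⬝ᵥ (Aᵀ *ᵥ w₂.2) + w₁.2 ⬝ᵥ (A *ᵥ w₂.1)
    + 1 / r * (w₁.2 ⬝ᵥ w₂.2)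

/-- The squared `H`-weighted norm `‖w‖²_H = ⟨w, Hw⟩`. -/
def HnormSq {n m : ℕ} (A : Matrix (Fin m) (Fin n) ℝ) (Q : Matrix (Fin n) (Fin n) ℝ) (r : ℝ)
    (w : (Fin n → ℝ) × (Fin m → ℝ)) : ℝ := Hbil A Q r w w

/-- The affine map `J(x, λ) = (−Aᵀλ, Ax − b)`. -/
def Jmap {n m : ℕ} (A : Matrix (Fin m) (Fin n) ℝ) (b : Fin m → ℝ)
    (w : (Fin n → ℝ) × (Fin m → ℝ)) : (Fin n → ℝ) × (Fin m → ℝ) :=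
  (-(Aᵀ *ᵥ w.2), A *ᵥ w.1 - b)

/-- The Euclidean inner product on `ℝⁿ × ℝᵐ`. -/
def pdot {n m : ℕ} (w₁ w₂ : (Fin n → ℝ) × (Fin m → ℝ)) : ℝ := w₁.1 ⬝ᵥ w₂.1 + w₁.2 ⬝ᵥ w₂.2

/-- `w* = (x*, λ*)` belongs to the solution set `M*` of `VI(θ, J, M)`, `M = X × ℝᵐ`:
`w*.1 ∈ X` and `θ(x) − θ(x*) + ⟨w − w*, J(w*)⟩ ≥ 0` for all `w ∈ M`. -/
def SolPoint {n m : ℕ} (θ : (Fin n → ℝ) → ℝ) (X : Set (Fin n → ℝ))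
    (A : Matrix (Fin m) (Fin n) ℝ) (b : Fin m → ℝ) (ws : (Fin n → ℝ) × (Fin m → ℝ)) : Prop :=
  ws.1 ∈ X ∧ ∀ w : (Fin n → ℝ) × (Fin m → ℝ), w.1 ∈ X →
    θ w.1 - θ ws.1 + pdot (w - ws) (Jmap A b ws) ≥ 0

/-- The P-ALM iteration: `x^{k+1} ∈ X` minimizes
`x ↦ θ(x) − ⟨λᵏ, Ax − b⟩ + (r/2)‖A(x − xᵏ)‖² + (1/2)⟨x − xᵏ, Q(x − xᵏ)⟩` over `X`, and
`λ^{k+1} = λᵏ − r(A(2x^{k+1} − xᵏ) − b)`. -/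
def PALM {n m : ℕ} (θ : (Fin n → ℝ) → ℝ) (X : Set (Fin n → ℝ))
    (A : Matrix (Fin m) (Fin n) ℝ) (b : Fin m → ℝ) (r : ℝ) (Q : Matrix (Fin n) (Fin n) ℝ)
    (x : ℕ → Fin n → ℝ) (lam : ℕ → Fin m → ℝ) : Prop :=
  (∀ k : ℕ, x (k + 1) ∈ X ∧ ∀ z ∈ X,
      θ (x (k + 1)) - lam k ⬝ᵥ (A *ᵥ x (k + 1) - b)
          + r / 2 * ((A *ᵥ (x (k + 1) - x k)) ⬝ᵥ (A *ᵥ (x (k + 1) - x k)))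
          + 1 / 2 * ((x (k + 1) - x k) ⬝ᵥ (Q *ᵥ (x (k + 1) - x k)))
        ≤ θ z - lam k ⬝ᵥ (A *ᵥ z - b)
          + r / 2 * ((A *ᵥ (z - x k)) ⬝ᵥ (A *ᵥ (z - x k)))
          + 1 / 2 * ((z - x k) ⬝ᵥ (Q *ᵥ (z - x k)))) ∧
  (∀ k : ℕ, lam (k + 1) = lam k - r • (A *ᵥ ((2 : ℝ) • x (k + 1) - x k) - b))

/-!
The `x`-step is a proximal step, so its first-order optimality condition, combined with the
multiplier update, says that `w^{k+1}` solves the variational inequality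
`θ(x) - θ(x^{k+1}) + ⟨w - w^{k+1}, J(w^{k+1}) + H(w^{k+1} - w^k)⟩ ≥ 0` on `M`. Testing it at `w*`
and adding the inequality defining `w* ∈ M*` tested at `w^{k+1}`, the `θ` terms cancel, and so do
the `J` terms because `J` is affine with skew-symmetric linear part. What remains is
`⟨w* - w^{k+1}, H(w^{k+1} - w^k)⟩ ≥ 0`, and expanding `‖w* - w^k‖²_H` around `w^{k+1}` gives the
contraction inequality.
-/

open Filter Topology Set

theorem ConvexOn.le_add_of_isMinOn_add {E : Type*} [AddCommGroup E] [Module ℝ E] {X : Set E}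
    {f g : E → ℝ} (hf : ConvexOn ℝ X f) {x z : E} (hx : x ∈ X) (hz : z ∈ X)
    (hmin : IsMinOn (f + g) X x) {D C : ℝ}
    (hg : ∀ t : ℝ, g (x + t • (z - x)) ≤ g x + t * D + t ^ 2 * C) : f x ≤ f z + D := by
  have hsmall : ∀ t ∈ Ioc (0 : ℝ) 1, f x ≤ f z + D + t * C := by
    rintro t ⟨ht0, ht1⟩
    have hseg : x + t • (z - x) = (1 - t) • x + t • z := by module
    have hconv := hf.2 hx hz (by linarith : 0 ≤ 1 - t) ht0.le (by ring)
    rw [← hseg, smul_eq_mul, smul_eq_mul] at hconv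
    have hle : (f + g) x ≤ (f + g) (x + t • (z - x)) :=
      hmin (hseg ▸ hf.1 hx hz (by linarith) ht0.le (by ring))
    simp only [Pi.add_apply] at hle
    refine le_of_mul_le_mul_left ?_ ht0
    linear_combination hle + hconv + hg t
  have hlim : Tendsto (fun t : ℝ => f z + D + t * C) (𝓝[>] 0) (𝓝 (f z + D)) := by
    have hcont : Continuous fun t : ℝ => f z + D + t * C := by fun_prop
    simpa using hcont.continuousWithinAt (s := Ioi 0) (x := 0) |>.tendsto
  exact ge_of_tendsto hlim (eventually_of_mem (Ioc_mem_nhdsGT one_pos) hsmall)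

namespace Matrix

variable {ι κ R : Type*} [CommRing R]

theorem IsSymm.dotProduct_mulVec_comm [Fintype ι] {G : Matrix ι ι R} (hG : G.IsSymm)
    (u v : ι → R) :
    u ⬝ᵥ (G *ᵥ v) = v ⬝ᵥ (G *ᵥ u) := by
  simpa only [hG.eq] using dotProduct_transpose_mulVec G u v

theorem IsSymm.add_smul_dotProduct_mulVec_add_smul [Fintype ι] {G : Matrix ι ι R}
    (hG : G.IsSymm) (u v : ι → R) (t : R) :
    (u + t • v) ⬝ᵥ (G *ᵥ (u + t • v)) =
      u ⬝ᵥ (G *ᵥ u) + 2 * t * (v ⬝ᵥ (G *ᵥ u)) + t ^ 2 * (v ⬝ᵥ (G *ᵥ v)) := by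
  simp only [mulVec_add, mulVec_smul, add_dotProduct, dotProduct_add, smul_dotProduct,
    dotProduct_smul, smul_eq_mul, hG.dotProduct_mulVec_comm u v]
  ring

theorem isSymm_smul_transpose_mul_add [Fintype κ] (A : Matrix κ ι R) {Q : Matrix ι ι R}
    (hQ : Q.IsSymm) (r : R) : (r • (Aᵀ * A) + Q).IsSymm :=
  IsSymm.add (IsSymm.smul (by simp [IsSymm, transpose_mul]) r) hQ

theorem dotProduct_smul_transpose_mul_add_mulVec [Fintype ι] [Fintype κ] (A : Matrix κ ι R)
    (Q : Matrix ι ι R) (r : R) (d : ι → R) :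
    d ⬝ᵥ ((r • (Aᵀ * A) + Q) *ᵥ d) = r * ((A *ᵥ d) ⬝ᵥ (A *ᵥ d)) + d ⬝ᵥ (Q *ᵥ d) := by
  rw [add_mulVec, smul_mulVec, ← mulVec_mulVec, dotProduct_add, dotProduct_smul,
    dotProduct_transpose_mulVec, smul_eq_mul]

end Matrix

section ProductSpace

variable {n m : ℕ}

theorem pdot_neg_left (u v : (Fin n → ℝ) × (Fin m → ℝ)) : pdot (-u) v = -pdot u v := by
  simp only [pdot, Prod.fst_neg, Prod.snd_neg, neg_dotProduct]
  ring

theorem pdot_add_right (u v v' : (Fin n → ℝ) × (Fin m → ℝ)) :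
    pdot u (v + v') = pdot u v + pdot u v' := by
  simp only [pdot, Prod.fst_add, Prod.snd_add, dotProduct_add]
  ring

theorem pdot_sub_Jmap_eq (A : Matrix (Fin m) (Fin n) ℝ) (b : Fin m → ℝ)
    (w w' : (Fin n → ℝ) × (Fin m → ℝ)) :
    pdot (w - w') (Jmap A b w) = pdot (w - w') (Jmap A b w') := by
  simp only [pdot, Jmap, Prod.fst_sub, Prod.snd_sub, dotProduct_neg, dotProduct_sub,
    sub_dotProduct, dotProduct_transpose_mulVec, mulVec_sub]
  ring

variable (A : Matrix (Fin m) (Fin n) ℝ) (Q : Matrix (Fin n) (Fin n) ℝ) (r : ℝ)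

def Hmul (w : (Fin n → ℝ) × (Fin m → ℝ)) : (Fin n → ℝ) × (Fin m → ℝ) :=
  ((r • (Aᵀ * A) + Q) *ᵥ w.1 + Aᵀ *ᵥ w.2, A *ᵥ w.1 + (1 / r) • w.2)

theorem Hbil_eq_pdot_Hmul (u v : (Fin n → ℝ) × (Fin m → ℝ)) :
    Hbil A Q r u v = pdot u (Hmul A Q r v) := by
  simp only [Hbil, pdot, Hmul, dotProduct_add, dotProduct_smul, smul_eq_mul]
  ring

theorem Hbil_add_left (u u' v : (Fin n → ℝ) × (Fin m → ℝ)) :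
    Hbil A Q r (u + u') v = Hbil A Q r u v + Hbil A Q r u' v := by
  simp only [Hbil, Prod.fst_add, Prod.snd_add, add_dotProduct]
  ring

theorem Hbil_add_right (u v v' : (Fin n → ℝ) × (Fin m → ℝ)) :
    Hbil A Q r u (v + v') = Hbil A Q r u v + Hbil A Q r u v' := by
  simp only [Hbil, Prod.fst_add, Prod.snd_add, mulVec_add, dotProduct_add]
  ring

theorem Hbil_comm (hQ : Q.IsSymm) (u v : (Fin n → ℝ) × (Fin m → ℝ)) :
    Hbil A Q r u v = Hbil A Q r v u := by
  simp only [Hbil, (isSymm_smul_transpose_mul_add A hQ r).dotProduct_mulVec_comm u.1,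
    dotProduct_transpose_mulVec, dotProduct_comm u.2 v.2]
  ring

theorem HnormSq_add (hQ : Q.IsSymm) (u v : (Fin n → ℝ) × (Fin m → ℝ)) :
    HnormSq A Q r (u + v) = HnormSq A Q r u + 2 * Hbil A Q r u v + HnormSq A Q r v := by
  simp only [HnormSq, Hbil_add_left, Hbil_add_right, Hbil_comm A Q r hQ v u]
  ring

theorem HnormSq_neg (u : (Fin n → ℝ) × (Fin m → ℝ)) : HnormSq A Q r (-u) = HnormSq A Q r u := by
  simp only [HnormSq, Hbil, Prod.fst_neg, Prod.snd_neg, mulVec_neg, neg_dotProduct_neg]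

theorem Jmap_add_Hmul_sub_eq {b : Fin m → ℝ} (hr : r ≠ 0) {x₀ x₁ : Fin n → ℝ}
    {l₀ l₁ : Fin m → ℝ} (hl : l₁ = l₀ - r • (A *ᵥ ((2 : ℝ) • x₁ - x₀) - b)) :
    Jmap A b (x₁, l₁) + Hmul A Q r ((x₁, l₁) - (x₀, l₀))
      = ((r • (Aᵀ * A) + Q) *ᵥ (x₁ - x₀) - Aᵀ *ᵥ l₀, 0) := by
  have hstep : (1 / r) • (l₁ - l₀) = -(A *ᵥ ((2 : ℝ) • x₁ - x₀) - b) := by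
    rw [hl, sub_sub_cancel_left, smul_neg, smul_smul, one_div, inv_mul_cancel₀ hr, one_smul]
  ext1
  · simp only [Jmap, Hmul, Prod.fst_add, Prod.mk_sub_mk, mulVec_sub]
    abel
  · simp only [Jmap, Hmul, Prod.snd_add, Prod.mk_sub_mk, hstep, mulVec_sub, mulVec_smul]
    module

end ProductSpace

section Iteration

variable {n m : ℕ} {θ : (Fin n → ℝ) → ℝ} {X : Set (Fin n → ℝ)}
    {A : Matrix (Fin m) (Fin n) ℝ} {b : Fin m → ℝ} {r : ℝ} {Q : Matrix (Fin n) (Fin n) ℝ}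
    {x : ℕ → Fin n → ℝ} {lam : ℕ → Fin m → ℝ}

theorem PALM.le_add_dotProduct (halg : PALM θ X A b r Q x lam) (hθ : ConvexOn ℝ X θ)
    (hQ : Q.IsSymm) (k : ℕ) {z : Fin n → ℝ} (hz : z ∈ X) :
    θ (x (k + 1)) ≤
      θ z + (z - x (k + 1)) ⬝ᵥ ((r • (Aᵀ * A) + Q) *ᵥ (x (k + 1) - x k) - Aᵀ *ᵥ lam k) := by
  set G := r • (Aᵀ * A) + Q
  set g : (Fin n → ℝ) → ℝ := fun y ↦
    -(lam k ⬝ᵥ (A *ᵥ y - b)) + 1 / 2 * ((y - x k) ⬝ᵥ (G *ᵥ (y - x k)))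
  have hmin : IsMinOn (θ + g) X (x (k + 1)) := isMinOn_iff.2 fun y hy ↦ by
    have hobj := (halg.1 k).2 y hy
    simp only [Pi.add_apply, g, G, dotProduct_smul_transpose_mul_add_mulVec]
    linarith
  refine hθ.le_add_of_isMinOn_add (halg.1 k).1 hz hmin
    (C := 1 / 2 * ((z - x (k + 1)) ⬝ᵥ (G *ᵥ (z - x (k + 1))))) fun t ↦ le_of_eq ?_
  have hshift : x (k + 1) + t • (z - x (k + 1)) - x k
      = (x (k + 1) - x k) + t • (z - x (k + 1)) := by abel
  have hG : G.IsSymm := isSymm_smul_transpose_mul_add A hQ r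
  simp only [g, hshift, hG.add_smul_dotProduct_mulVec_add_smul]
  simp only [mulVec_add, mulVec_smul, dotProduct_add, dotProduct_smul, dotProduct_sub,
    dotProduct_transpose_mulVec, smul_eq_mul]
  ring

theorem PALM.le_add_pdot_Jmap_add_Hbil (halg : PALM θ X A b r Q x lam)
    (hθ : ConvexOn ℝ X θ) (hQ : Q.IsSymm) (hr : r ≠ 0) (k : ℕ)
    {w : (Fin n → ℝ) × (Fin m → ℝ)} (hw : w.1 ∈ X) :
    θ (x (k + 1)) ≤
      θ w.1 + pdot (w - (x (k + 1), lam (k + 1))) (Jmap A b (x (k + 1), lam (k + 1)))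
        + Hbil A Q r (w - (x (k + 1), lam (k + 1))) ((x (k + 1), lam (k + 1)) - (x k, lam k)) := by
  rw [add_assoc, Hbil_eq_pdot_Hmul, ← pdot_add_right, Jmap_add_Hmul_sub_eq A Q r hr (halg.2 k)]
  simpa [pdot] using halg.le_add_dotProduct hθ hQ k hw

end Iteration

theorem stmt_6_general (n m : ℕ) (θ : (Fin n → ℝ) → ℝ) (hθ : ConvexOn ℝ Set.univ θ)
    (X : Set (Fin n → ℝ)) (hXconvex : Convex ℝ X)
    (A : Matrix (Fin m) (Fin n) ℝ) (b : Fin m → ℝ) (r : ℝ) (hr : 0 < r)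
    (Q : Matrix (Fin n) (Fin n) ℝ) (hQ : Q.PosDef)
    (x : ℕ → Fin n → ℝ) (lam : ℕ → Fin m → ℝ) (halg : PALM θ X A b r Q x lam) :
    ∀ ws : (Fin n → ℝ) × (Fin m → ℝ), SolPoint θ X A b ws →
      ∀ k : ℕ,
        HnormSq A Q r (ws - (x (k + 1), lam (k + 1))) ≤
          HnormSq A Q r (ws - (x k, lam k))
            - HnormSq A Q r ((x k, lam k) - (x (k + 1), lam (k + 1))) := by
  intro ws hws k
  have hQsymm : Q.IsSymm := isHermitian_iff_isSymm.1 hQ.isHermitian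
  have hvi := halg.le_add_pdot_Jmap_add_Hbil (hθ.subset (Set.subset_univ X) hXconvex) hQsymm
    hr.ne' k hws.1
  have hsol := hws.2 (x (k + 1), lam (k + 1)) (halg.1 k).1
  set w₁ : (Fin n → ℝ) × (Fin m → ℝ) := (x (k + 1), lam (k + 1))
  set w₀ : (Fin n → ℝ) × (Fin m → ℝ) := (x k, lam k)
  rw [← neg_sub ws w₁, pdot_neg_left, pdot_sub_Jmap_eq] at hsol
  have hcross : 0 ≤ Hbil A Q r (ws - w₁) (w₁ - w₀) := by linarith
  rw [show ws - w₀ = (ws - w₁) + (w₁ - w₀) by abel, ← neg_sub w₁ w₀, HnormSq_add A Q r hQsymm,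
    HnormSq_neg]
  linarith

/-- Theorem 2.3, contraction inequality (10). -/
theorem stmt_6 (n m : ℕ) (θ : (Fin n → ℝ) → ℝ) (hθ : ConvexOn ℝ Set.univ θ)
    (X : Set (Fin n → ℝ)) (hXne : X.Nonempty) (hXclosed : IsClosed X) (hXconvex : Convex ℝ X)
    (A : Matrix (Fin m) (Fin n) ℝ) (b : Fin m → ℝ) (r : ℝ) (hr : 0 < r)
    (Q : Matrix (Fin n) (Fin n) ℝ) (hQ : Q.PosDef)
    (x : ℕ → Fin n → ℝ) (lam : ℕ → Fin m → ℝ) (halg : PALM θ X A b r Q x lam) :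
    ∀ ws : (Fin n → ℝ) × (Fin m → ℝ), SolPoint θ X A b ws →
      ∀ k : ℕ,
        HnormSq A Q r (ws - (x (k + 1), lam (k + 1))) ≤
          HnormSq A Q r (ws - (x k, lam k))
            - HnormSq A Q r ((x k, lam k) - (x (k + 1), lam (k + 1))) :=
  stmt_6_general n m θ hθ X hXconvex A b r hr Q hQ x lam halg
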